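/- Let f : ℝ^n → ℝ^n be convex, monotone, and additively homogeneous, with an eigenvector, let C_1,…,C_s be the critical classes of f and C = N^c(f) = C_1 ∪ ⋯ ∪ C_s. Then: (1) for any two eigenvectors v, v' of f, the vector v − v' is constant on each C_i; (2) if two eigenvectors v, v' satisfy v_i = v'_i for all i ∈ C, then v = v'; (3) the restriction map r_C : ℝ^n → ℝ^C, x ↦ (x_i)_{i∈C}, maps the eigenspace E(f) bijectively onto its image E^c(f) = r_C(E(f)); E^c(f) is a convex subset of ℝ^C which is closed under componentwise minimum (u, w ∈ E^c(f) implies u ∧ w ∈ E^c(f)), and the inverse bijection E^c(f) → E(f) is monotone and additively homogeneous. -/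

import Mathlib

open Matrix Filter

/-- `f` is additively homogeneous: `f (c·1 + x) = c·1 + f x`. -/
def AddHomog {n : ℕ} (f : (Fin n → ℝ) → (Fin n → ℝ)) : Prop :=
  ∀ (c : ℝ) (x : Fin n → ℝ), f (fun i => c + x i) = fun i => c + f x i

/-- A map between coordinate spaces is convex if each coordinate function is convex. -/
def IsConvexMap {n m : ℕ} (f : (Fin n → ℝ) → (Fin m → ℝ)) : Prop :=
  ∀ i, ConvexOn ℝ Set.univ (fun x => f x i)

/-- Subdifferential of a convex map `f : ℝ^n → ℝ^m` at `v`: matrices `P` with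
`f x - f v ≥ P (x - v)` componentwise. -/
def Subdiff {n m : ℕ} (f : (Fin n → ℝ) → (Fin m → ℝ)) (v : Fin n → ℝ) :
    Set (Matrix (Fin m) (Fin n) ℝ) :=
  {P | ∀ x i, P.mulVec (x - v) i ≤ f x i - f v i}

/-- `p` is a stochastic vector. -/
def IsStochVec {n : ℕ} (p : Fin n → ℝ) : Prop := (∀ i, 0 ≤ p i) ∧ ∑ i, p i = 1

/-- `P` is a row-stochastic matrix. -/
def IsStochMat {n : ℕ} (P : Matrix (Fin n) (Fin n) ℝ) : Prop := ∀ i, IsStochVec (P i)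

/-- `i` has access to `j` in the graph of the nonnegative matrix `P`
(arcs `i → j` when `P i j ≠ 0`). -/
def MatAccess {n : ℕ} (P : Matrix (Fin n) (Fin n) ℝ) : Fin n → Fin n → Prop :=
  Relation.ReflTransGen (fun i j => P i j ≠ 0)

/-- `C` is a class of `P`: an equivalence class of mutual access. -/
def IsClass {n : ℕ} (P : Matrix (Fin n) (Fin n) ℝ) (C : Set (Fin n)) : Prop :=
  ∃ i, C = {j | MatAccess P i j ∧ MatAccess P j i}

/-- `C` is a final class of `P`: a class with no access out of itself. -/
def IsFinalClass {n : ℕ} (P : Matrix (Fin n) (Fin n) ℝ) (C : Set (Fin n)) : Prop :=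
  IsClass P C ∧ ∀ i ∈ C, ∀ j, MatAccess P i j → j ∈ C

/-- `N^f(P)`: the union of the final classes of `P`. -/
def finalNodes {n : ℕ} (P : Matrix (Fin n) (Fin n) ℝ) : Set (Fin n) :=
  {i | ∃ C, IsFinalClass P C ∧ i ∈ C}

/-- Final graph `G^f(P)`: union of graphs of `P_{FF}` over final classes `F`. -/
def finalGraph {n : ℕ} (P : Matrix (Fin n) (Fin n) ℝ) : Fin n → Fin n → Prop :=
  fun i j => ∃ C, IsFinalClass P C ∧ i ∈ C ∧ j ∈ C ∧ P i j ≠ 0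

/-- `N^f(PP)` for a set of matrices. -/
def finalNodesSet {n : ℕ} (PP : Set (Matrix (Fin n) (Fin n) ℝ)) : Set (Fin n) :=
  {i | ∃ P ∈ PP, i ∈ finalNodes P}

/-- `𝒞^f(PP)`: final classes of matrices in `PP`. -/
def finalClassesSet {n : ℕ} (PP : Set (Matrix (Fin n) (Fin n) ℝ)) : Set (Set (Fin n)) :=
  {C | ∃ P ∈ PP, IsFinalClass P C}

/-- `𝒢^f(PP)`: union of final graphs of matrices in `PP`. -/
def finalGraphSet {n : ℕ} (PP : Set (Matrix (Fin n) (Fin n) ℝ)) : Fin n → Fin n → Prop :=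
  fun i j => ∃ P ∈ PP, finalGraph P i j

/-- Access in a directed graph given as a relation. -/
def GAccess {n : ℕ} (G : Fin n → Fin n → Prop) : Fin n → Fin n → Prop :=
  Relation.ReflTransGen G

/-- `C` is a (nontrivial) class of the graph `G`: an equivalence class of mutual
access containing at least one arc (i.e. the node set of a strongly connected component
of the graph `G`). -/
def IsGraphClass {n : ℕ} (G : Fin n → Fin n → Prop) (C : Set (Fin n)) : Prop :=
  (∃ i, C = {j | GAccess G i j ∧ GAccess G j i}) ∧ ∃ i ∈ C, ∃ j ∈ C, G i j

/-- `G^k`: arcs are directed paths of length `k` in `G`. -/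
def GraphPow {n : ℕ} (G : Fin n → Fin n → Prop) (k : ℕ) : Fin n → Fin n → Prop :=
  fun i j => ∃ c : ℕ → Fin n, c 0 = i ∧ c k = j ∧ ∀ t < k, G (c t) (c (t + 1))

/-- There is a circuit of length `ℓ ≥ 1` of `G` with all nodes in `C`. -/
def HasCircuitIn {n : ℕ} (G : Fin n → Fin n → Prop) (C : Set (Fin n)) (ℓ : ℕ) : Prop :=
  0 < ℓ ∧ ∃ c : ℕ → Fin n, c 0 = c ℓ ∧ (∀ t ≤ ℓ, c t ∈ C) ∧ ∀ t < ℓ, G (c t) (c (t + 1))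

/-- gcd of a set of natural numbers. -/
noncomputable def SetGcd (S : Set ℕ) : ℕ :=
  sInf {d | (∀ s ∈ S, d ∣ s) ∧ ∀ e, (∀ s ∈ S, e ∣ s) → e ∣ d}

/-- lcm of a set of natural numbers. -/
noncomputable def SetLcm (S : Set ℕ) : ℕ :=
  sInf {m | (∀ s ∈ S, s ∣ m) ∧ ∀ e, (∀ s ∈ S, s ∣ e) → m ∣ e}

/-- Cyclicity of a graph: lcm over the strongly connected components of the
gcd of the lengths of their circuits. -/
noncomputable def GraphCyclicity {n : ℕ} (G : Fin n → Fin n → Prop) : ℕ :=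
  SetLcm {d | ∃ C, IsGraphClass G C ∧ d = SetGcd {ℓ | HasCircuitIn G C ℓ}}

/-- The (additive) eigenspace of `f` for eigenvalue `lam`. -/
def Eigenspace {n : ℕ} (f : (Fin n → ℝ) → (Fin n → ℝ)) (lam : ℝ) : Set (Fin n → ℝ) :=
  {x | f x = fun i => lam + x i}

/-- Restriction of a vector to the coordinates in `C`. -/
def restrictTo {n : ℕ} (C : Set (Fin n)) (x : Fin n → ℝ) : C → ℝ := fun i => x i

/-!
Subgradients of a monotone additively homogeneous map are row-stochastic. Hence for an
eigenvector `u`, a sub-eigenvector `w` (`f w ≤ λ + w`) and `Q ∈ ∂f(u)` we get `Q (w - u) ≤ w - u`,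
and by the minimum principle `w - u` is constant on every final class of `Q`; this gives (1).

For eigenvectors `v`, `w`, the nodes where `v - w` is maximal are closed under the arcs of any
`P ∈ ∂f(v)`, so they contain a final class `F` of `P`. Replacing the rows of `P` outside `F` by
subgradients at `u` gives some `Q ∈ ∂f(u)` with a final class inside `F`, i.e. a critical node.
So `v ≤ w` on the critical nodes forces `v ≤ w`, which gives injectivity and monotonicity.

Conversely, iterating `x ↦ f x - λ` from a sub-eigenvector `w` decreases to an eigenvector
which still agrees with `w` on the critical nodes. Convex combinations and minima of eigenvectors
are sub-eigenvectors, so the image of the eigenspace is convex and closed under `⊓`.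
-/

theorem Relation.ReflTransGen.mem_of_closed {α : Type*} {r : α → α → Prop} {S : Set α}
    (hS : ∀ a ∈ S, ∀ b, r a b → b ∈ S) {a b : α} (hab : Relation.ReflTransGen r a b)
    (ha : a ∈ S) : b ∈ S := by
  induction hab with
  | refl => exact ha
  | tail _ hbc ih => exact hS _ ih _ hbc

theorem ConvexOn.exists_subgradient {E : Type*} [TopologicalSpace E] [AddCommGroup E]
    [IsTopologicalAddGroup E] [Module ℝ E] [ContinuousSMul ℝ E] {g : E → ℝ}
    (hg : ConvexOn ℝ Set.univ g) (hcont : Continuous g) (v : E) :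
    ∃ φ : StrongDual ℝ E, ∀ x, φ (x - v) ≤ g x - g v := by
  have hconvex : Convex ℝ {p : E × ℝ | g p.1 < p.2} := by
    simpa using hg.convex_strict_epigraph
  obtain ⟨L, hL⟩ := geometric_hahn_banach_open_point hconvex
    (isOpen_lt (hcont.comp continuous_fst) continuous_snd) (x := (v, g v)) (lt_irrefl (g v))
  set M := L.comp (ContinuousLinearMap.inl ℝ E ℝ)
  set β := L (0, 1)
  have hL_apply : ∀ y r, L (y, r) = M y + r * β := fun y r => by
    rw [show (y, r) = (y, 0) + r • ((0 : E), (1 : ℝ)) by simp, map_add, map_smul, smul_eq_mul]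
    rfl
  have hβ : β < 0 := by
    have := hL (v, g v + 1) (by simp)
    rw [hL_apply, hL_apply] at this
    linarith
  -- `(y, g y)` is a limit of the points `(y, g y + ε / -β)` of the strict epigraph
  have hsep : ∀ y, M y + g y * β ≤ M v + g v * β := fun y =>
    le_of_forall_pos_lt_add fun ε hε => by
      have := hL (y, g y + ε / -β) (by simpa using div_pos hε (neg_pos.2 hβ))
      rw [hL_apply, hL_apply, add_mul, div_mul_eq_mul_div, div_neg, mul_div_assoc,
        div_self hβ.ne, mul_one] at this
      linarith
  refine ⟨(-β)⁻¹ • M, fun x => ?_⟩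
  rw [_root_.smul_apply, map_sub, smul_eq_mul, inv_mul_le_iff₀ (neg_pos.2 hβ)]
  linarith [hsep x]

theorem Monotone.exists_isFixedPt_tendsto_iterate {α : Type*} [TopologicalSpace α]
    [ConditionallyCompleteLattice α] [InfConvergenceClass α] [T2Space α] {T : α → α}
    (hmono : Monotone T) (hcont : Continuous T) {x y : α} (hx : T x ≤ x)
    (hy : Function.IsFixedPt T y) (hyx : y ≤ x) :
    ∃ z, Function.IsFixedPt T z ∧ z ≤ x ∧ Tendsto (fun k => T^[k] x) atTop (nhds z) := by
  have hanti : Antitone fun k => T^[k] x := antitone_nat_of_succ_le fun k => by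
    rw [Function.iterate_succ_apply]
    exact hmono.iterate k hx
  have hbdd : BddBelow (Set.range fun k => T^[k] x) := ⟨y, by
    rintro _ ⟨k, rfl⟩
    exact (hy.iterate k).symm.trans_le (hmono.iterate k hyx)⟩
  have hlim := tendsto_atTop_ciInf hanti hbdd
  refine ⟨_, ?_, ciInf_le hbdd 0, hlim⟩
  have hlim_succ : Tendsto (fun k => T^[k + 1] x) atTop (nhds (T (⨅ k, T^[k] x))) := by
    simp only [Function.iterate_succ_apply']
    exact (hcont.tendsto _).comp hlim
  exact tendsto_nhds_unique hlim_succ ((tendsto_add_atTop_iff_nat 1).2 hlim)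

section MonotoneHomogeneous

variable {n : ℕ} {f : (Fin n → ℝ) → (Fin n → ℝ)}

theorem mem_subdiff_iff {m : ℕ} {g : (Fin n → ℝ) → (Fin m → ℝ)} {v : Fin n → ℝ}
    {P : Matrix (Fin m) (Fin n) ℝ} :
    P ∈ Subdiff g v ↔ ∀ x i, ∑ k, P i k * (x k - v k) ≤ g x i - g v i :=
  Iff.rfl

theorem le_dist_add_apply (x y : Fin n → ℝ) (i : Fin n) : x i ≤ dist x y + y i := by
  linarith [le_abs_self (x i - y i), (Real.dist_eq (x i) (y i)).symm.trans_le
    (dist_le_pi_dist x y i)]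

theorem AddHomog.apply_le_dist_add (hhom : AddHomog f) (hmon : Monotone f) (x y : Fin n → ℝ)
    (i : Fin n) : f x i ≤ dist x y + f y i := by
  have := hmon (le_dist_add_apply x y) i
  rwa [hhom] at this

theorem AddHomog.const_add_mem_eigenspace (hhom : AddHomog f) {lam : ℝ} {u : Fin n → ℝ}
    (hu : u ∈ Eigenspace f lam) (c : ℝ) : (fun i => c + u i) ∈ Eigenspace f lam := by
  change f _ = _
  rw [hhom, hu]
  ext i
  ring

theorem AddHomog.lipschitzWith (hhom : AddHomog f) (hmon : Monotone f) : LipschitzWith 1 f :=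
  LipschitzWith.of_dist_le_mul fun x y => by
    rw [NNReal.coe_one, one_mul, dist_pi_le_iff dist_nonneg]
    intro i
    rw [Real.dist_eq, abs_sub_le_iff]
    constructor
    · linarith [hhom.apply_le_dist_add hmon x y i]
    · linarith [hhom.apply_le_dist_add hmon y x i, dist_comm x y]

theorem AddHomog.isStochMat_of_mem_subdiff (hhom : AddHomog f) (hmon : Monotone f)
    {v : Fin n → ℝ} {P : Matrix (Fin n) (Fin n) ℝ} (hP : P ∈ Subdiff f v) : IsStochMat P := by
  intro i
  refine ⟨fun j => ?_, ?_⟩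
  · have hdown : v - Pi.single j 1 ≤ v := sub_le_self v (Pi.single_nonneg.2 zero_le_one)
    have := hP (v - Pi.single j 1) i
    simp only [sub_sub_cancel_left, mulVec_neg, Pi.neg_apply, mulVec_single_one,
      col_apply] at this
    linarith [hmon hdown i]
  · have hshift : ∀ c : ℝ, c * ∑ k, P i k ≤ c := fun c => by
      have := mem_subdiff_iff.1 hP (fun k => c + v k) i
      simpa [hhom c v, Finset.mul_sum, mul_comm] using this
    linarith [hshift 1, hshift (-1)]

theorem subdiff_nonempty (hconv : IsConvexMap f) (hhom : AddHomog f) (hmon : Monotone f)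
    (v : Fin n → ℝ) : (Subdiff f v).Nonempty := by
  have hcont : Continuous f := (hhom.lipschitzWith hmon).continuous
  choose φ hφ using fun i => (hconv i).exists_subgradient ((continuous_apply i).comp hcont) v
  refine ⟨LinearMap.toMatrix' (LinearMap.pi fun i => (φ i : (Fin n → ℝ) →ₗ[ℝ] ℝ)),
    fun x i => ?_⟩
  simpa [LinearMap.toMatrix'_mulVec] using hφ i x

end MonotoneHomogeneous

section FinalClasses

variable {n : ℕ} {P : Matrix (Fin n) (Fin n) ℝ} {F : Set (Fin n)}

theorem IsFinalClass.nonempty (hF : IsFinalClass P F) : F.Nonempty := by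
  obtain ⟨⟨i, rfl⟩, -⟩ := hF
  exact ⟨i, .refl, .refl⟩

theorem IsFinalClass.matAccess (hF : IsFinalClass P F) {i j : Fin n} (hi : i ∈ F)
    (hj : j ∈ F) : MatAccess P i j := by
  obtain ⟨⟨k, rfl⟩, -⟩ := hF
  exact hi.2.trans hj.1

theorem IsFinalClass.mem_of_ne_zero (hF : IsFinalClass P F) {i j : Fin n} (hi : i ∈ F)
    (hij : P i j ≠ 0) : j ∈ F :=
  hF.2 i hi j (.single hij)

theorem exists_isFinalClass_subset {S : Set (Fin n)} (hne : S.Nonempty)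
    (hS : ∀ i ∈ S, ∀ j, P i j ≠ 0 → j ∈ S) : ∃ F, IsFinalClass P F ∧ F ⊆ S := by
  classical
  -- a node of `S` with the fewest successors is accessible from each of its successors
  obtain ⟨i, hiS, hmin⟩ := S.exists_min_image
    (fun i => (Finset.univ.filter (MatAccess P i)).card) S.toFinite hne
  have hback : ∀ j, MatAccess P i j → MatAccess P j i := fun j hij => by
    have hsub : Finset.univ.filter (MatAccess P j) ⊆ Finset.univ.filter (MatAccess P i) :=
      fun k hk => by
        simp only [Finset.mem_filter, Finset.mem_univ, true_and] at hk ⊢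
        exact Relation.ReflTransGen.trans hij hk
    have hj : i ∈ Finset.univ.filter (MatAccess P j) := by
      rw [Finset.eq_of_subset_of_card_le hsub
        (hmin j (Relation.ReflTransGen.mem_of_closed hS hij hiS))]
      exact Finset.mem_filter.2 ⟨Finset.mem_univ i, .refl⟩
    exact (Finset.mem_filter.1 hj).2
  refine ⟨{j | MatAccess P i j ∧ MatAccess P j i}, ⟨⟨i, rfl⟩, ?_⟩,
    fun j hj => Relation.ReflTransGen.mem_of_closed hS hj.1 hiS⟩
  rintro k ⟨hik, -⟩ l hkl
  exact ⟨hik.trans hkl, hback l (hik.trans hkl)⟩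

theorem IsStochVec.sum_mul_eq_of_forall_ne_zero {p w : Fin n → ℝ} {a : ℝ} (hp : IsStochVec p)
    (hw : ∀ k, p k ≠ 0 → w k = a) : ∑ k, p k * w k = a :=
  calc ∑ k, p k * w k = ∑ k, p k * a := Finset.sum_congr rfl fun k _ => by
        rcases eq_or_ne (p k) 0 with h | h
        · simp [h]
        · rw [hw k h]
    _ = a := by rw [← Finset.sum_mul, hp.2, one_mul]

theorem IsStochVec.eq_of_le_of_sum_mul_le {p w : Fin n → ℝ} {a : ℝ} (hp : IsStochVec p)
    (hle : ∀ k, p k ≠ 0 → a ≤ w k) (hsum : ∑ k, p k * w k ≤ a) : ∀ k, p k ≠ 0 → w k = a := by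
  have hterm : ∀ k ∈ Finset.univ, 0 ≤ p k * (w k - a) := fun k _ => by
    rcases eq_or_ne (p k) 0 with h | h
    · simp [h]
    · exact mul_nonneg (hp.1 k) (sub_nonneg.2 (hle k h))
  have hzero : ∑ k, p k * (w k - a) = 0 := by
    refine le_antisymm ?_ (Finset.sum_nonneg hterm)
    simp only [mul_sub, Finset.sum_sub_distrib, ← Finset.sum_mul, hp.2, one_mul]
    linarith
  intro k hk
  rcases mul_eq_zero.1 ((Finset.sum_eq_zero_iff_of_nonneg hterm).1 hzero k (Finset.mem_univ k))
    with h | h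
  · exact absurd h hk
  · linarith

theorem IsFinalClass.eq_of_superharmonic (hP : IsStochMat P) (hF : IsFinalClass P F)
    {w : Fin n → ℝ} (hw : ∀ i, ∑ k, P i k * w k ≤ w i) {i j : Fin n} (hi : i ∈ F)
    (hj : j ∈ F) : w i = w j := by
  obtain ⟨m, hmF, hmin⟩ := F.exists_min_image w F.toFinite hF.nonempty
  have hclosed : ∀ k ∈ {k | k ∈ F ∧ w k = w m}, ∀ l, P k l ≠ 0 →
      l ∈ {k | k ∈ F ∧ w k = w m} := by
    rintro k ⟨hkF, hk⟩ l hkl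
    exact ⟨hF.mem_of_ne_zero hkF hkl, (hP k).eq_of_le_of_sum_mul_le
      (fun l hl => hmin l (hF.mem_of_ne_zero hkF hl)) (hk ▸ hw k) l hkl⟩
  have hspread : ∀ k ∈ F, w k = w m := fun k hk =>
    (Relation.ReflTransGen.mem_of_closed hclosed (hF.matAccess hmF hk) ⟨hmF, rfl⟩).2
  rw [hspread i hi, hspread j hj]

end FinalClasses

def SubEigenspace {n : ℕ} (f : (Fin n → ℝ) → (Fin n → ℝ)) (lam : ℝ) : Set (Fin n → ℝ) :=
  {x | f x ≤ fun i => lam + x i}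

section Eigenvectors

variable {n : ℕ} {f : (Fin n → ℝ) → (Fin n → ℝ)} {lam : ℝ} {u v w : Fin n → ℝ}

theorem eigenspace_subset_subEigenspace : Eigenspace f lam ⊆ SubEigenspace f lam :=
  fun _ hx => le_of_eq hx

theorem convex_subEigenspace (hconv : IsConvexMap f) : Convex ℝ (SubEigenspace f lam) := by
  intro v hv v' hv' a b ha hb hab i
  calc f (a • v + b • v') i ≤ a • f v i + b • f v' i :=
        (hconv i).2 (Set.mem_univ v) (Set.mem_univ v') ha hb hab
    _ ≤ a * (lam + v i) + b * (lam + v' i) := by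
        simp only [smul_eq_mul]
        gcongr
        exacts [hv i, hv' i]
    _ = lam + (a • v + b • v') i := by
        simp only [Pi.add_apply, Pi.smul_apply, smul_eq_mul]
        linear_combination lam * hab

theorem inf_mem_subEigenspace (hmon : Monotone f) {v' : Fin n → ℝ}
    (hv : v ∈ SubEigenspace f lam) (hv' : v' ∈ SubEigenspace f lam) :
    v ⊓ v' ∈ SubEigenspace f lam := fun i =>
  calc f (v ⊓ v') i ≤ min (lam + v i) (lam + v' i) :=
        le_min ((hmon inf_le_left i).trans (hv i)) ((hmon inf_le_right i).trans (hv' i))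
    _ = lam + (v ⊓ v') i := min_add_add_left _ _ _

theorem IsFinalClass.sub_eq_sub_of_mem_subEigenspace (hhom : AddHomog f) (hmon : Monotone f)
    (hu : u ∈ Eigenspace f lam) (hw : w ∈ SubEigenspace f lam) {Q : Matrix (Fin n) (Fin n) ℝ}
    (hQ : Q ∈ Subdiff f u) {F : Set (Fin n)} (hF : IsFinalClass Q F) {i j : Fin n} (hi : i ∈ F)
    (hj : j ∈ F) : w i - u i = w j - u j :=
  hF.eq_of_superharmonic (w := fun k => w k - u k) (hhom.isStochMat_of_mem_subdiff hmon hQ)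
    (fun i => by
      have hfu : f u i = lam + u i := congrFun hu i
      linarith [mem_subdiff_iff.1 hQ w i, hw i]) hi hj

theorem exists_subdiff_finalClass_subset (hconv : IsConvexMap f) (hhom : AddHomog f)
    (hmon : Monotone f) (hu : u ∈ Eigenspace f lam) (hv : v ∈ Eigenspace f lam)
    {P : Matrix (Fin n) (Fin n) ℝ} (hP : P ∈ Subdiff f v) {F : Set (Fin n)}
    (hF : IsFinalClass P F) : ∃ Q ∈ Subdiff f u, ∃ F', IsFinalClass Q F' ∧ F' ⊆ F := by
  classical
  obtain ⟨R, hR⟩ := subdiff_nonempty hconv hhom hmon u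
  -- rows of `P` from `F` are subgradients at `u` too, since `v - u` is constant on `F`
  let Q : Matrix (Fin n) (Fin n) ℝ := fun i => if i ∈ F then P i else R i
  have hQ : Q ∈ Subdiff f u := by
    refine mem_subdiff_iff.2 fun x i => ?_
    by_cases hi : i ∈ F
    · have hshift : ∑ k, P i k * (v k - u k) = v i - u i :=
        (hhom.isStochMat_of_mem_subdiff hmon hP i).sum_mul_eq_of_forall_ne_zero fun k hk => by
          linarith [hF.sub_eq_sub_of_mem_subEigenspace hhom hmon hv
            (eigenspace_subset_subEigenspace hu) hP (hF.mem_of_ne_zero hi hk) hi]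
      have hfv : f v i = lam + v i := congrFun hv i
      have hfu : f u i = lam + u i := congrFun hu i
      have hsplit : ∑ k, P i k * (x k - u k)
          = ∑ k, P i k * (x k - v k) + ∑ k, P i k * (v k - u k) := by
        rw [← Finset.sum_add_distrib]
        exact Finset.sum_congr rfl fun k _ => by ring
      simp only [Q, if_pos hi]
      linarith [mem_subdiff_iff.1 hP x i]
    · simpa only [Q, if_neg hi] using mem_subdiff_iff.1 hR x i
  obtain ⟨F', hF', hF'F⟩ := exists_isFinalClass_subset (P := Q) hF.nonempty fun i hi j hij =>
    hF.mem_of_ne_zero hi (by simpa only [Q, if_pos hi] using hij)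
  exact ⟨Q, hQ, F', hF', hF'F⟩

theorem le_of_forall_mem_finalNodesSet_le (hconv : IsConvexMap f) (hhom : AddHomog f)
    (hmon : Monotone f) (hu : u ∈ Eigenspace f lam) (hv : v ∈ Eigenspace f lam)
    (hw : w ∈ SubEigenspace f lam) (hle : ∀ i ∈ finalNodesSet (Subdiff f u), v i ≤ w i) :
    v ≤ w := by
  by_contra hnot
  obtain ⟨i, hi⟩ := not_forall.1 hnot
  obtain ⟨m, -, hmax⟩ := Finset.univ.exists_max_image (fun i => v i - w i) ⟨i, Finset.mem_univ i⟩
  obtain ⟨P, hP⟩ := subdiff_nonempty hconv hhom hmon v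
  have hclosed : ∀ k ∈ {k | v k - w k = v m - w m}, ∀ l, P k l ≠ 0 →
      l ∈ {k | v k - w k = v m - w m} := by
    intro k hk l hkl
    have hfv : f v k = lam + v k := congrFun hv k
    have := (hhom.isStochMat_of_mem_subdiff hmon hP k).eq_of_le_of_sum_mul_le
      (w := fun l => w l - v l) (a := w m - v m)
      (fun l _ => by linarith [hmax l (Finset.mem_univ l)])
      (by linarith [mem_subdiff_iff.1 hP w k, hw k, show v k - w k = v m - w m from hk]) l hkl
    show v l - w l = v m - w m
    linarith
  obtain ⟨F, hF, hFmax⟩ := exists_isFinalClass_subset (S := {k | v k - w k = v m - w m}) ⟨m, rfl⟩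
    hclosed
  obtain ⟨Q, hQ, F', hF', hF'F⟩ := exists_subdiff_finalClass_subset hconv hhom hmon hu hv hP hF
  obtain ⟨c, hc⟩ := hF'.nonempty
  have hcmax : v c - w c = v m - w m := hFmax (hF'F hc)
  linarith [hle c ⟨Q, hQ, F', hF', hc⟩, hmax i (Finset.mem_univ i), not_le.1 hi]

theorem IsFinalClass.le_apply_of_le (hhom : AddHomog f) (hmon : Monotone f)
    (hu : u ∈ Eigenspace f lam) (hw : w ∈ SubEigenspace f lam) {Q : Matrix (Fin n) (Fin n) ℝ}
    (hQ : Q ∈ Subdiff f u) {F : Set (Fin n)} (hF : IsFinalClass Q F) {x : Fin n → ℝ}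
    (hx : ∀ k ∈ F, w k ≤ x k) {j : Fin n} (hj : j ∈ F) : lam + w j ≤ f x j := by
  have hQj := hhom.isStochMat_of_mem_subdiff hmon hQ j
  have hmono : ∑ k, Q j k * (w k - u k) ≤ ∑ k, Q j k * (x k - u k) :=
    Finset.sum_le_sum fun k _ => by
      rcases eq_or_ne (Q j k) 0 with h | h
      · simp [h]
      · exact mul_le_mul_of_nonneg_left (by linarith [hx k (hF.mem_of_ne_zero hj h)]) (hQj.1 k)
  have hconst : ∑ k, Q j k * (w k - u k) = w j - u j :=
    hQj.sum_mul_eq_of_forall_ne_zero fun k hk =>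
      hF.sub_eq_sub_of_mem_subEigenspace hhom hmon hu hw hQ (hF.mem_of_ne_zero hj hk) hj
  have hfu : f u j = lam + u j := congrFun hu j
  linarith [mem_subdiff_iff.1 hQ x j]

theorem exists_mem_eigenspace_le_eq_on_finalNodesSet (hhom : AddHomog f) (hmon : Monotone f)
    (hu : u ∈ Eigenspace f lam) (hw : w ∈ SubEigenspace f lam) :
    ∃ v ∈ Eigenspace f lam, v ≤ w ∧ ∀ i ∈ finalNodesSet (Subdiff f u), v i = w i := by
  set T : (Fin n → ℝ) → (Fin n → ℝ) := fun x i => f x i - lam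
  have hTmono : Monotone T := fun x y hxy i => sub_le_sub_right (hmon hxy i) lam
  have hTcont : Continuous T := continuous_pi fun i =>
    ((continuous_apply i).comp (hhom.lipschitzWith hmon).continuous).sub continuous_const
  have hfixed : ∀ x, Function.IsFixedPt T x ↔ x ∈ Eigenspace f lam := fun x => by
    simp only [Function.IsFixedPt, T, Eigenspace, Set.mem_ofPred_eq, funext_iff]
    exact forall_congr' fun i => by constructor <;> intro h <;> linarith
  -- the translate `u - dist u w` is a fixed point of `T` below `w`
  obtain ⟨v, hv, hvw, hlim⟩ := hTmono.exists_isFixedPt_tendsto_iterate hTcont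
    (x := w) (fun i => by linarith [hw i])
    ((hfixed _).2 (hhom.const_add_mem_eigenspace hu (-dist u w)))
    (fun i => by linarith [le_dist_add_apply u w i])
  refine ⟨v, (hfixed v).1 hv, hvw, ?_⟩
  rintro i ⟨Q, hQ, F, hF, hi⟩
  have hiter : ∀ k, ∀ j ∈ F, w j ≤ T^[k] w j := by
    intro k
    induction k with
    | zero => exact fun j _ => le_rfl
    | succ k ih =>
      intro j hj
      rw [Function.iterate_succ_apply']
      linarith [hF.le_apply_of_le hhom hmon hu hw hQ ih hj]
  exact le_antisymm (hvw i)
    (ge_of_tendsto' (((continuous_apply i).tendsto v).comp hlim) fun k => hiter k i hi)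

theorem restrictTo_mem_image_eigenspace (hhom : AddHomog f) (hmon : Monotone f)
    (hu : u ∈ Eigenspace f lam) (hw : w ∈ SubEigenspace f lam) :
    restrictTo (finalNodesSet (Subdiff f u)) w ∈
      restrictTo (finalNodesSet (Subdiff f u)) '' Eigenspace f lam := by
  obtain ⟨v, hv, -, hvw⟩ := exists_mem_eigenspace_le_eq_on_finalNodesSet hhom hmon hu hw
  exact ⟨v, hv, funext fun i => hvw i i.2⟩

theorem IsGraphClass.sub_eq_sub (hhom : AddHomog f) (hmon : Monotone f)
    (hu : u ∈ Eigenspace f lam) (hv : v ∈ SubEigenspace f lam) (hw : w ∈ SubEigenspace f lam)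
    {C : Set (Fin n)} (hC : IsGraphClass (finalGraphSet (Subdiff f u)) C) {i j : Fin n}
    (hi : i ∈ C) (hj : j ∈ C) : v i - w i = v j - w j := by
  obtain ⟨⟨k, rfl⟩, -⟩ := hC
  have hclosed : ∀ a ∈ {a | v a - w a = v i - w i}, ∀ b, finalGraphSet (Subdiff f u) a b →
      b ∈ {a | v a - w a = v i - w i} := by
    rintro a ha b ⟨Q, hQ, F, hF, haF, hbF, -⟩
    have hva := hF.sub_eq_sub_of_mem_subEigenspace hhom hmon hu hv hQ haF hbF
    have hwa := hF.sub_eq_sub_of_mem_subEigenspace hhom hmon hu hw hQ haF hbF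
    show v b - w b = v i - w i
    linarith [show v a - w a = v i - w i from ha]
  exact (Relation.ReflTransGen.mem_of_closed hclosed (hi.2.trans hj.1) rfl).symm

end Eigenvectors

theorem stmt7_general (n : ℕ) (f : (Fin n → ℝ) → (Fin n → ℝ))
    (hconv : IsConvexMap f) (hmon : Monotone f) (hhom : AddHomog f)
    (u : Fin n → ℝ) (lam : ℝ) (hu : f u = fun i => lam + u i) :
    -- (1) differences of eigenvectors are constant on each critical class
    (∀ v ∈ Eigenspace f lam, ∀ v' ∈ Eigenspace f lam,
      ∀ Ci, IsGraphClass (finalGraphSet (Subdiff f u)) Ci →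
        ∀ i ∈ Ci, ∀ j ∈ Ci, v i - v' i = v j - v' j) ∧
    -- (2) eigenvectors agreeing on the critical nodes coincide
    (∀ v ∈ Eigenspace f lam, ∀ v' ∈ Eigenspace f lam,
      (∀ i ∈ finalNodesSet (Subdiff f u), v i = v' i) → v = v') ∧
    -- (3) the restriction map is injective on the eigenspace, its image is convex and
    -- closed under componentwise minimum, and its inverse is monotone and homogeneous
    Set.InjOn (restrictTo (finalNodesSet (Subdiff f u))) (Eigenspace f lam) ∧
    Convex ℝ (restrictTo (finalNodesSet (Subdiff f u)) '' Eigenspace f lam) ∧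
    (∀ y z, y ∈ restrictTo (finalNodesSet (Subdiff f u)) '' Eigenspace f lam →
      z ∈ restrictTo (finalNodesSet (Subdiff f u)) '' Eigenspace f lam →
      y ⊓ z ∈ restrictTo (finalNodesSet (Subdiff f u)) '' Eigenspace f lam) ∧
    (∀ v ∈ Eigenspace f lam, ∀ v' ∈ Eigenspace f lam,
      restrictTo (finalNodesSet (Subdiff f u)) v ≤
        restrictTo (finalNodesSet (Subdiff f u)) v' → v ≤ v') ∧
    (∀ v ∈ Eigenspace f lam, ∀ c : ℝ, (fun i => c + v i) ∈ Eigenspace f lam ∧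
      restrictTo (finalNodesSet (Subdiff f u)) (fun i => c + v i) =
        fun i => c + restrictTo (finalNodesSet (Subdiff f u)) v i) := by
  have hsub := @eigenspace_subset_subEigenspace n f lam
  have hle : ∀ v ∈ Eigenspace f lam, ∀ v' ∈ Eigenspace f lam,
      (∀ i ∈ finalNodesSet (Subdiff f u), v i ≤ v' i) → v ≤ v' := fun v hv v' hv' =>
    le_of_forall_mem_finalNodesSet_le hconv hhom hmon hu hv (hsub hv')
  have heq : ∀ v ∈ Eigenspace f lam, ∀ v' ∈ Eigenspace f lam,
      (∀ i ∈ finalNodesSet (Subdiff f u), v i = v' i) → v = v' := fun v hv v' hv' h =>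
    le_antisymm (hle v hv v' hv' fun i hi => (h i hi).le) (hle v' hv' v hv fun i hi => (h i hi).ge)
  refine ⟨fun v hv v' hv' C hC i hi j hj => hC.sub_eq_sub hhom hmon hu (hsub hv) (hsub hv') hi hj,
    heq, fun v hv v' hv' h => heq v hv v' hv' fun i hi => congrFun h ⟨i, hi⟩, ?_, ?_,
    fun v hv v' hv' h => hle v hv v' hv' fun i hi => h ⟨i, hi⟩,
    fun v hv c => ⟨hhom.const_add_mem_eigenspace hv c, rfl⟩⟩
  · rintro _ ⟨v, hv, rfl⟩ _ ⟨v', hv', rfl⟩ a b ha hb hab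
    exact restrictTo_mem_image_eigenspace hhom hmon hu
      (convex_subEigenspace hconv (hsub hv) (hsub hv') ha hb hab)
  · rintro _ _ ⟨v, hv, rfl⟩ ⟨v', hv', rfl⟩
    exact restrictTo_mem_image_eigenspace hhom hmon hu
      (inf_mem_subEigenspace hmon (hsub hv) (hsub hv'))

/-- structure of the eigenspace: differences of eigenvectors are constant
on each critical class, eigenvectors are determined by their values on the critical
nodes, and the restriction to the critical nodes maps the eigenspace bijectively onto a
convex inf-subsemilattice, with monotone additively homogeneous inverse. -/
theorem stmt7 (n : ℕ) (hn : 1 ≤ n) (f : (Fin n → ℝ) → (Fin n → ℝ))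
    (hconv : IsConvexMap f) (hmon : Monotone f) (hhom : AddHomog f)
    (u : Fin n → ℝ) (lam : ℝ) (hu : f u = fun i => lam + u i) :
    -- (1) differences of eigenvectors are constant on each critical class
    (∀ v ∈ Eigenspace f lam, ∀ v' ∈ Eigenspace f lam,
      ∀ Ci, IsGraphClass (finalGraphSet (Subdiff f u)) Ci →
        ∀ i ∈ Ci, ∀ j ∈ Ci, v i - v' i = v j - v' j) ∧
    -- (2) eigenvectors agreeing on the critical nodes coincide
    (∀ v ∈ Eigenspace f lam, ∀ v' ∈ Eigenspace f lam,
      (∀ i ∈ finalNodesSet (Subdiff f u), v i = v' i) → v = v') ∧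
    -- (3) the restriction map is injective on the eigenspace, its image is convex and
    -- closed under componentwise minimum, and its inverse is monotone and homogeneous
    Set.InjOn (restrictTo (finalNodesSet (Subdiff f u))) (Eigenspace f lam) ∧
    Convex ℝ (restrictTo (finalNodesSet (Subdiff f u)) '' Eigenspace f lam) ∧
    (∀ y z, y ∈ restrictTo (finalNodesSet (Subdiff f u)) '' Eigenspace f lam →
      z ∈ restrictTo (finalNodesSet (Subdiff f u)) '' Eigenspace f lam →
      y ⊓ z ∈ restrictTo (finalNodesSet (Subdiff f u)) '' Eigenspace f lam) ∧
    (∀ v ∈ Eigenspace f lam, ∀ v' ∈ Eigenspace f lam,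
      restrictTo (finalNodesSet (Subdiff f u)) v ≤
        restrictTo (finalNodesSet (Subdiff f u)) v' → v ≤ v') ∧
    (∀ v ∈ Eigenspace f lam, ∀ c : ℝ, (fun i => c + v i) ∈ Eigenspace f lam ∧
      restrictTo (finalNodesSet (Subdiff f u)) (fun i => c + v i) =
        fun i => c + restrictTo (finalNodesSet (Subdiff f u)) v i) :=
  stmt7_general n f hconv hmon hhom u lam hu
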